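/- arXiv:1910.08981 — 3 statements merged into one kernel-verified Lean document; each statement's English description precedes it below -/
import Mathlib

section
/- Let n be a positive integer, let 0 < α < 1, set ε = 6·(α/6)^{2^{n−1}}, and let s₁ > s₂ > … > s_n > 0 be real numbers. Then there exists a real number u such that ε ≤ {u s_k} ≤ α for every k ∈ {1,…,n}, where {x} denotes the fractional part of x. -/
/-!
Induction on the number of points, adding the largest point `t` last. Given `v` with
`{v x} ∈ [ε, α²/6]` on the other points, Dirichlet's approximation theorem gives `1 ≤ m ≤ M`,
`M + 1 ≈ 2/α`, with `m v t` within `1/(M+1) ≤ α/2` of an integer. A small correction `d ≥ 0`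
in `u = m v + d/t` lifts `{u t}` into `[ε, α/2]`, while for `x ≤ t` the value
`{u x} = m {v x} + d x/t` stays in `[ε, α]`. Passing from `α` to `α²/6` squares `α/6`, whence
the exponent `2^(n-1)`.
-/

open Set Int

theorem exists_nat_two_div_lt_succ_le_three_div {α : ℝ} (hα0 : 0 < α) (hα1 : α ≤ 1) :
    ∃ M : ℕ, 0 < M ∧ 2 / α < M + 1 ∧ (M : ℝ) + 1 ≤ 3 / α := by
  have h2 : 2 ≤ 2 / α := by rw [le_div_iff₀ hα0]; linarith
  have h3 : 2 / α + 1 ≤ 3 / α := by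
    rw [div_add_one hα0.ne']; gcongr; linarith
  refine ⟨⌊2 / α⌋₊, Nat.floor_pos.mpr (by linarith), Nat.lt_floor_add_one _, ?_⟩
  linarith [Nat.floor_le (by linarith : (0 : ℝ) ≤ 2 / α)]

theorem exists_fract_mul_mem_Icc_insert {α ε t v : ℝ} {S : Set ℝ} (hα0 : 0 < α) (hα1 : α < 1)
    (hε0 : 0 < ε) (hε : ε ≤ α ^ 2 / 6) (ht : 0 < t) (hS : ∀ x ∈ S, 0 ≤ x ∧ x ≤ t)
    (hv : ∀ x ∈ S, fract (v * x) ∈ Icc ε (α ^ 2 / 6)) :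
    ∃ u : ℝ, ∀ x ∈ insert t S, fract (u * x) ∈ Icc ε α := by
  obtain ⟨M, hM0, hM2, hM3⟩ := exists_nat_two_div_lt_succ_le_three_div hα0 hα1.le
  obtain ⟨j, m, hm0, hmM, hδ⟩ := Real.exists_int_int_abs_mul_sub_le (v * t) hM0
  set δ : ℝ := m * (v * t) - j
  set η : ℝ := 1 / (M + 1)
  have hη : η ≤ α / 2 := by
    rw [div_le_iff₀ (by positivity)]
    rw [div_lt_iff₀ hα0] at hM2
    linarith
  have hMβ : (M + 1) * (α ^ 2 / 6) ≤ α / 2 := by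
    calc (M + 1) * (α ^ 2 / 6) ≤ 3 / α * (α ^ 2 / 6) := by gcongr
      _ = α / 2 := by field_simp; ring
  have hm1 : (1 : ℝ) ≤ m := by exact_mod_cast hm0
  have hmM' : (m : ℝ) ≤ M := by exact_mod_cast hmM
  -- shifting by `d / t` moves `u * t` from `j + δ` to `j + max δ ε`
  set d : ℝ := max δ ε - δ
  have hd0 : 0 ≤ d := by simp [d]
  have hd : d ≤ ε + η := by
    have := neg_le_of_abs_le hδ
    have : 0 ≤ η := by positivity
    exact sub_le_iff_le_add.mpr (max_le (by linarith) (by linarith))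
  refine ⟨m * v + d / t, ?_⟩
  simp only [mem_insert_iff, forall_eq_or_imp]
  constructor
  · have hmax : max δ ε ≤ α / 2 := max_le (by linarith [le_of_abs_le hδ]) (by nlinarith)
    have hut : (m * v + d / t) * t - max δ ε = j := by simp only [d, δ]; field_simp; ring
    rw [fract_eq_iff.mpr ⟨by positivity, by linarith, j, hut⟩]
    exact ⟨le_max_right _ _, by linarith⟩
  · intro x hx
    obtain ⟨hx0, hxt⟩ := hS x hx
    obtain ⟨hf1, hf2⟩ := hv x hx
    have hxt' : x / t ≤ 1 := (div_le_one ht).mpr hxt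
    have hdx0 : 0 ≤ d * (x / t) := by positivity
    have hdx : d * (x / t) ≤ d := mul_le_of_le_one_right hd0 hxt'
    have hmf : fract (v * x) ≤ m * fract (v * x) := le_mul_of_one_le_left (fract_nonneg _) hm1
    have hmfM : m * fract (v * x) ≤ M * (α ^ 2 / 6) := by gcongr
    have hval : m * fract (v * x) + d * (x / t) ≤ α := by nlinarith
    have hux : (m * v + d / t) * x - (m * fract (v * x) + d * (x / t)) = (m * ⌊v * x⌋ : ℤ) := by
      rw [← self_sub_floor]; push_cast; field_simp; ring
    rw [fract_eq_iff.mpr ⟨by linarith, by linarith, _, hux⟩]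
    exact ⟨by linarith, hval⟩

theorem exists_fract_mul_mem_Icc_of_card_le (n : ℕ) {α : ℝ} (hα0 : 0 < α) (hα1 : α < 1)
    (S : Finset ℝ) (hS : S.card ≤ n + 1) (hpos : ∀ x ∈ S, 0 < x) :
    ∃ u : ℝ, ∀ x ∈ S, fract (u * x) ∈ Icc (6 * (α / 6) ^ 2 ^ n) α := by
  induction n generalizing α S with
  | zero =>
    rcases S.eq_empty_or_nonempty with rfl | ⟨t, ht⟩
    · exact ⟨0, by simp⟩
    refine ⟨α / t, fun x hx => ?_⟩
    rw [Finset.card_le_one.mp hS x hx t ht, div_mul_cancel₀ _ (hpos t ht).ne',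
      fract_eq_self.mpr ⟨hα0.le, hα1⟩]
    simp only [pow_zero, pow_one, mem_Icc]
    constructor <;> linarith
  | succ n ih =>
    rcases S.eq_empty_or_nonempty with rfl | hne
    · exact ⟨0, by simp⟩
    set t := S.max' hne
    have ht : t ∈ S := S.max'_mem hne
    have hcard : (S.erase t).card ≤ n + 1 := by
      rw [Finset.card_erase_of_mem ht]
      omega
    obtain ⟨v, hv⟩ := ih (α := α ^ 2 / 6) (by positivity) (by nlinarith) (S.erase t) hcard
      fun x hx => hpos x (Finset.mem_of_mem_erase hx)
    rw [show 6 * (α ^ 2 / 6 / 6) ^ 2 ^ n = 6 * (α / 6) ^ 2 ^ (n + 1) by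
      rw [pow_succ' 2 n, pow_mul]; ring] at hv
    have hε : 6 * (α / 6) ^ 2 ^ (n + 1) ≤ α ^ 2 / 6 := by
      have : (α / 6) ^ 2 ^ (n + 1) ≤ (α / 6) ^ 2 :=
        pow_le_pow_of_le_one (by positivity) (by linarith) (Nat.le_self_pow (by omega) 2)
      linarith
    obtain ⟨u, hu⟩ := exists_fract_mul_mem_Icc_insert (S := ↑(S.erase t)) hα0 hα1 (by positivity)
      hε (hpos t ht) (fun x hx => ⟨(hpos x (Finset.mem_of_mem_erase hx)).le,
        S.le_max' x (Finset.mem_of_mem_erase hx)⟩) hv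
    refine ⟨u, fun x hx => hu x ?_⟩
    rwa [← Finset.coe_insert, Finset.insert_erase ht]

theorem statement3_general (n : ℕ) (α : ℝ) (hα0 : 0 < α) (hα1 : α < 1)
    (s : Fin n → ℝ) (hpos : ∀ k, 0 < s k) :
    ∃ u : ℝ, ∀ k : Fin n,
      6 * (α / 6) ^ (2 ^ (n - 1)) ≤ Int.fract (u * s k) ∧ Int.fract (u * s k) ≤ α := by
  obtain ⟨u, hu⟩ := exists_fract_mul_mem_Icc_of_card_le (n - 1) hα0 hα1 (Finset.univ.image s)
    (Finset.card_image_le.trans (by simp only [Finset.card_univ, Fintype.card_fin]; omega))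
    (by simpa using hpos)
  exact ⟨u, fun k => hu (s k) (Finset.mem_image_of_mem s (Finset.mem_univ k))⟩

/-- Lemma 2.5. -/
theorem statement3 (n : ℕ) (hn : 0 < n) (α : ℝ) (hα0 : 0 < α) (hα1 : α < 1)
    (s : Fin n → ℝ) (hpos : ∀ k, 0 < s k) (hanti : StrictAnti s) :
    ∃ u : ℝ, ∀ k : Fin n,
      6 * (α / 6) ^ (2 ^ (n - 1)) ≤ Int.fract (u * s k) ∧ Int.fract (u * s k) ≤ α :=
  statement3_general n α hα0 hα1 s hpos
end

section
/- Let q ≥ 3 and let B be a KT-system for D = {a₁, …, a_r} ⊆ F_q^*. Then for every good family F that is R⁻(B)-similar to P_q, at least r(r−1)/2 + 1 distinct orderings of the functions F_{q,a₁}, …, F_{q,a_r} occur for arbitrarily large x. -/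
open Complex Filter MeasureTheory Asymptotics
open scoped ENNReal

noncomputable section

/-- The number of primes `p ≤ x` with `p ≡ a (mod q)`. -/
def primesCount (q : ℕ) (a : ZMod q) (x : ℝ) : ℕ :=
  ((Finset.range (Nat.floor x + 1)).filter (fun p : ℕ => p.Prime ∧ (p : ZMod q) = a)).card

/-- The number of primes `p ≤ x`. -/
def primePi (x : ℝ) : ℕ :=
  ((Finset.range (Nat.floor x + 1)).filter Nat.Prime).card

/-- A system `B` of hypothetical zeros: to each non-principal Dirichlet character mod `q`
it assigns a multiset of complex numbers with nonnegative imaginary parts, recorded via the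
multiplicity function `mult`.  `Rminus` and `Rplus` are the infimum and supremum of the real
parts; they satisfy `1/2 < Rminus ≤ Rplus ≤ 1`, and `∑ n(ρ,χ)/|ρ| < ∞`. -/
structure ZeroSystem (q : ℕ) where
  mult : DirichletCharacter ℂ q → ℂ → ℕ
  Rminus : ℝ
  Rplus : ℝ
  mult_principal : ∀ ρ : ℂ, mult 1 ρ = 0
  im_nonneg : ∀ χ ρ, mult χ ρ ≠ 0 → 0 ≤ ρ.im
  real_conj : ∀ χ (ρ : ℂ), ρ.im = 0 → mult χ ρ = mult (χ.ringHomComp (starRingEnd ℂ)) ρ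
  isGLB_Rminus : IsGLB {r : ℝ | ∃ χ ρ, mult χ ρ ≠ 0 ∧ ρ.re = r} Rminus
  isLUB_Rplus : IsLUB {r : ℝ | ∃ χ ρ, mult χ ρ ≠ 0 ∧ ρ.re = r} Rplus
  half_lt_Rminus : 1 / 2 < Rminus
  Rplus_le_one : Rplus ≤ 1
  summable_inv : Summable (fun p : DirichletCharacter ℂ q × ℂ =>
    (mult p.1 p.2 : ℝ) / ‖p.2‖)

/-- `f(ρ) = x^ρ/(ρ log x) + (1/ρ) ∫₂ˣ t^(ρ-1)/log² t dt`. -/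
def fterm (ρ : ℂ) (x : ℝ) : ℂ :=
  (x : ℂ) ^ ρ / (ρ * (Real.log x : ℂ)) +
    (1 / ρ) * ∫ t in (2:ℝ)..x, (t : ℂ) ^ (ρ - 1) / ((Real.log t : ℂ)) ^ 2

/-- The weight in `Σ*`: summands with real `ρ` are halved. -/
def rstar (ρ : ℂ) : ℝ := if ρ.im = 0 then 1 / 2 else 1

/-- `P_{q,a}(x;B)`. -/
def Pfun {q : ℕ} (B : ZeroSystem q) (a : (ZMod q)ˣ) (x : ℝ) : ℝ :=
  (primePi x : ℝ) / (Nat.totient q) -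
    (2 / (Nat.totient q)) *
      (∑' p : DirichletCharacter ℂ q × ℂ,
        (starRingEnd ℂ) (p.1 (a : ZMod q)) *
          ((rstar p.2 * B.mult p.1 p.2 : ℝ) : ℂ) * fterm p.2 x).re

/-- Two functions are `β`-similar if their difference is `o(x^β / log x)` as `x → ∞`. -/
def SimilarTo (β : ℝ) (F G : ℝ → ℝ) : Prop :=
  (fun x => F x - G x) =o[atTop] fun x => x ^ β / Real.log x

/-- A family `F` indexed by `F_q^*` is similar to the family `P_q` of the system `B`. -/
def FamilySimilar {q : ℕ} (β : ℝ) (F : (ZMod q)ˣ → ℝ → ℝ) (B : ZeroSystem q) : Prop :=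
  ∀ a : (ZMod q)ˣ, SimilarTo β (F a) (Pfun B a)

/-- `g(ρ; a, b) = Σ_χ n(ρ,χ)(χ(a) - χ(b))`. -/
def gcoef {q : ℕ} (B : ZeroSystem q) (ρ : ℂ) (a b : (ZMod q)ˣ) : ℂ :=
  ∑' χ : DirichletCharacter ℂ q, (B.mult χ ρ : ℂ) * (χ (a : ZMod q) - χ (b : ZMod q))

/-- `β(a,b) = sup { Re ρ : g(ρ; a,b) ≠ 0 }`. -/
def betaAB {q : ℕ} (B : ZeroSystem q) (a b : (ZMod q)ˣ) : ℝ :=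
  sSup {r : ℝ | ∃ ρ : ℂ, gcoef B ρ a b ≠ 0 ∧ ρ.re = r}

/-- `z(a,b) = ⋃_χ { ρ ∈ B(χ) : g(ρ;a,b) ≠ 0, Re ρ = β(a,b) }`. -/
def zset {q : ℕ} (B : ZeroSystem q) (a b : (ZMod q)ˣ) : Set ℂ :=
  {ρ : ℂ | (∃ χ, B.mult χ ρ ≠ 0) ∧ gcoef B ρ a b ≠ 0 ∧ ρ.re = betaAB B a b}

/-- A family of functions is good if any two members that change relative order attain
equal values in between. -/
def GoodFamily {q : ℕ} (F : (ZMod q)ˣ → ℝ → ℝ) : Prop :=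
  ∀ a b : (ZMod q)ˣ, ∀ x y : ℝ, F a x < F b x → F b y < F a y →
    ∃ w, min x y ≤ w ∧ w ≤ max x y ∧ F a w = F b w

/-- `B` is a KT-system for `D`. -/
def IsKTSystem {q : ℕ} (B : ZeroSystem q) (D : Set (ZMod q)ˣ) : Prop :=
  ∀ F : (ZMod q)ˣ → ℝ → ℝ, FamilySimilar B.Rminus F B →
    ∀ a ∈ D, ∀ b ∈ D, a ≠ b → ∀ X : ℝ, ∃ x > X, F b x < F a x

/-- The number of orderings of the functions `F_{q,a}`, `a ∈ D`, which occur for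
arbitrarily large `x`. -/
def orderingsCount {q : ℕ} (F : (ZMod q)ˣ → ℝ → ℝ) (D : Finset (ZMod q)ˣ) : ℕ :=
  Set.ncard {σ : Fin D.card ≃ {a // a ∈ D} |
    ∀ X : ℝ, ∃ x > X, ∀ i j : Fin D.card, i ≤ j → F (σ j) x ≤ F (σ i) x}

/-- The total size `|B|` of a system, as an extended nonnegative real. -/
def systemSize {q : ℕ} (B : ZeroSystem q) : ℝ≥0∞ :=
  ∑' p : DirichletCharacter ℂ q × ℂ, (B.mult p.1 p.2 : ℝ≥0∞)

/-- `B` is an extremal barrier for `D`: a KT-system for `D` that is a barrier for the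
statement `s(D;F) ≥ |D|(|D|-1)/2 + 2`. -/
def IsExtremalBarrier {q : ℕ} (B : ZeroSystem q) (D : Finset (ZMod q)ˣ) : Prop :=
  IsKTSystem B (D : Set (ZMod q)ˣ) ∧
    ∀ F : (ZMod q)ˣ → ℝ → ℝ, FamilySimilar B.Rminus F B →
      ¬ (D.card * (D.card - 1) / 2 + 2 ≤ orderingsCount F D)

/-!
For `i < j`, the KT property makes `F_{a_i}` and `F_{a_j}` overtake each other for arbitrarily
large `x`, so by goodness they coincide for arbitrarily large `x`. Where they coincide, the values
can be sorted in two ways whose inversion sets differ exactly by the pair `(i, j)`; as there are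
only finitely many permutations, one such couple of orderings occurs for arbitrarily large `x`.
So the inversion sets of the orderings occurring for arbitrarily large `x` form a family of
subsets of the `r(r-1)/2` pairs that contains an edge of the hypercube in every direction, and
such a family has at least `r(r-1)/2 + 1` members: collapsing one direction loses a member.
-/

namespace Finset

theorem card_add_one_le_of_forall_exists_insert_mem {α : Type*} [DecidableEq α] (P : Finset α)
    {V : Finset (Finset α)} (hV : V.Nonempty)
    (h : ∀ p ∈ P, ∃ A ∈ V, p ∉ A ∧ insert p A ∈ V) : #P + 1 ≤ #V := by
  induction P using Finset.induction generalizing V with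
  | empty => simpa using hV.card_pos
  | @insert p P hp IH =>
    obtain ⟨A, hA, hpA, hpA'⟩ := h p (mem_insert_self p P)
    set W := V.image (·.erase p)
    -- erasing `p` identifies `A` with `insert p A`, so the projection `W` loses a point
    have hW : #W < #V := by
      refine card_image_le.lt_of_ne fun hcard => ?_
      have hinj := card_image_iff.mp hcard hA hpA'
        (by simp [erase_insert hpA, erase_eq_of_notMem hpA])
      exact hpA (hinj ▸ mem_insert_self p A)
    have hWP : ∀ p' ∈ P, ∃ A ∈ W, p' ∉ A ∧ insert p' A ∈ W := by
      intro p' hp'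
      obtain ⟨A', hA', hpA', hpA''⟩ := h p' (mem_insert_of_mem hp')
      have hne : p' ≠ p := ne_of_mem_of_not_mem hp' hp
      refine ⟨A'.erase p, mem_image_of_mem _ hA', fun hm => hpA' (mem_of_mem_erase hm), ?_⟩
      rw [← erase_insert_of_ne hne]
      exact mem_image_of_mem _ hpA''
    have := IH (V := W) (hV.image _) hWP
    rw [card_insert_of_notMem hp]
    omega

end Finset

namespace Equiv.Perm

variable {r : ℕ}

def inversions (σ : Perm (Fin r)) : Finset (Fin r × Fin r) :=
  {p | p.1 < p.2 ∧ σ.symm p.2 < σ.symm p.1}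

theorem mem_inversions {σ : Perm (Fin r)} {k l : Fin r} :
    (k, l) ∈ σ.inversions ↔ k < l ∧ σ.symm l < σ.symm k := by
  simp [inversions]

end Equiv.Perm

namespace Tuple

open Equiv.Perm

variable {r : ℕ} {α : Type*} [LinearOrder α]

theorem sort_symm_lt_sort_symm_iff {f : Fin r → α} (hf : Function.Injective f) (k l : Fin r) :
    (sort f).symm k < (sort f).symm l ↔ f k < f l := by
  have hmono : StrictMono (f ∘ sort f) :=
    (monotone_sort f).strictMono_of_injective (hf.comp (Equiv.injective _))
  simpa using (hmono.lt_iff_lt (a := (sort f).symm k) (b := (sort f).symm l)).symm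

theorem mem_inversions_sort {f : Fin r → α} (hf : Function.Injective f) {k l : Fin r} :
    (k, l) ∈ (sort f).inversions ↔ k < l ∧ f l < f k := by
  rw [mem_inversions, sort_symm_lt_sort_symm_iff hf]

theorem inversions_sort_eq_insert {f g : Fin r → α} (hf : Function.Injective f)
    (hg : Function.Injective g) {i j : Fin r} (hij : i < j) (hf_ij : f i < f j)
    (hg_ij : g j < g i) (hfg : ∀ k l, k < l → (k, l) ≠ (i, j) → (f l < f k ↔ g l < g k)) :
    (i, j) ∉ (sort f).inversions ∧ (sort g).inversions = insert (i, j) (sort f).inversions := by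
  refine ⟨by simp [mem_inversions_sort hf, hf_ij.le], ?_⟩
  ext ⟨k, l⟩
  rw [Finset.mem_insert, mem_inversions_sort hf, mem_inversions_sort hg]
  by_cases hkl : (k, l) = (i, j)
  · simp only [Prod.mk.injEq] at hkl
    obtain ⟨rfl, rfl⟩ := hkl
    simp [hij, hg_ij]
  · by_cases hlt : k < l
    · simp [hkl, hlt, hfg k l hlt hkl]
    · simp [hlt, hkl]

end Tuple

section Ties

open Tuple Equiv Function OrderDual

variable {r : ℕ} {β : Type*} [LinearOrder β]

theorem antitone_comp_sort_toLex (v : Fin r → β) (n : Fin r → ℕ) :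
    Antitone (v ∘ sort fun k => toLex (toDual (v k), n k)) :=
  monotone_toDual_comp_iff.mp fun _ _ h =>
    Prod.Lex.monotone_fst _ _ (monotone_sort (fun k => toLex (toDual (v k), n k)) h)

/-- Positions `2k + 2`, except that `i` is moved next to `j`: just before it for `c = 1`,
just after it for `c = 3`. -/
def tieBreak (i j : Fin r) (c : ℕ) (k : Fin r) : ℕ :=
  if k = i then 2 * j + c else 2 * k + 2

theorem tieBreak_injective (i j : Fin r) {c : ℕ} (hc : Odd c) : Injective (tieBreak i j c) := by
  obtain ⟨m, rfl⟩ := hc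
  intro k l hkl
  unfold tieBreak at hkl
  split_ifs at hkl with hk hl hl
  · rw [hk, hl]
  all_goals omega

theorem tieBreak_lt_iff_of_ne {i j k l : Fin r} (hij : i < j) (hkl : k < l)
    (hne : (k, l) ≠ (i, j)) :
    tieBreak i j 1 l < tieBreak i j 1 k ↔ tieBreak i j 3 l < tieBreak i j 3 k := by
  have hij' : (i : ℕ) < j := hij
  have hkl' : (k : ℕ) < l := hkl
  have hne' : ¬((k : ℕ) = i ∧ (l : ℕ) = j) := fun h => hne (by simp [Fin.ext h.1, Fin.ext h.2])
  unfold tieBreak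
  split_ifs with hl hk hk <;> simp only [← Fin.val_inj] at * <;> omega

theorem exists_sort_inversions_insert (v : Fin r → β) {i j : Fin r} (hij : i < j)
    (hv : v i = v j) :
    ∃ σ τ : Perm (Fin r), Antitone (v ∘ σ) ∧ Antitone (v ∘ τ) ∧
      (i, j) ∉ σ.inversions ∧ τ.inversions = insert (i, j) σ.inversions := by
  have hkey {c : ℕ} (hc : Odd c) : Injective fun k => toLex (toDual (v k), tieBreak i j c k) :=
    fun _ _ h => tieBreak_injective i j hc (congrArg (fun p => (ofLex p).2) h)
  refine ⟨_, _, antitone_comp_sort_toLex v (tieBreak i j 1),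
    antitone_comp_sort_toLex v (tieBreak i j 3),
    inversions_sort_eq_insert (hkey odd_one) (hkey (by decide)) hij ?_ ?_ ?_⟩
  · simp [Prod.Lex.toLex_lt_toLex, hv, tieBreak, hij.ne']
  · simp [Prod.Lex.toLex_lt_toLex, hv, tieBreak, hij.ne']
  · intro k l hkl hne
    simp only [Prod.Lex.toLex_lt_toLex, tieBreak_lt_iff_of_ne hij hkl hne]

end Ties

section Orderings

open Equiv Tuple OrderDual Finset

variable {ι γ : Type*} [LinearOrder γ] {l : Filter ι} {r : ℕ}

theorem choose_two_add_one_le_ncard_frequently_antitone [l.NeBot] (G : Fin r → ι → γ)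
    (hG : ∀ i j, i < j → ∃ᶠ x in l, G i x = G j x) :
    r.choose 2 + 1 ≤ {σ : Perm (Fin r) | ∃ᶠ x in l, Antitone fun k => G (σ k) x}.ncard := by
  set S := {σ : Perm (Fin r) | ∃ᶠ x in l, Antitone fun k => G (σ k) x}
  set V := S.toFinite.toFinset.image Perm.inversions
  have hV : V.Nonempty := by
    have hsort : ∃ᶠ x in l, ∃ σ : Perm (Fin r), Antitone fun k => G (σ k) x :=
      Frequently.of_forall fun x => ⟨_, antitone_comp_sort_toLex (G · x) fun _ => 0⟩
    obtain ⟨σ, hσ⟩ := frequently_exists.mp hsort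
    exact ⟨_, mem_image_of_mem _ (S.toFinite.mem_toFinset.mpr hσ)⟩
  have hedge : ∀ p ∈ ({p ∈ univ ×ˢ univ | p.1 < p.2} : Finset (Fin r × Fin r)),
      ∃ A ∈ V, p ∉ A ∧ insert p A ∈ V := by
    rintro ⟨i, j⟩ hp
    have hij : i < j := by simpa using hp
    have hties : ∃ᶠ x in l, ∃ στ : Perm (Fin r) × Perm (Fin r),
        (Antitone fun k => G (στ.1 k) x) ∧ (Antitone fun k => G (στ.2 k) x) ∧
          (i, j) ∉ στ.1.inversions ∧ στ.2.inversions = insert (i, j) στ.1.inversions :=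
      (hG i j hij).mono fun x hx =>
        let ⟨σ, τ, h⟩ := exists_sort_inversions_insert (G · x) hij hx
        ⟨(σ, τ), h⟩
    obtain ⟨⟨σ, τ⟩, hστ⟩ := frequently_exists.mp hties
    obtain ⟨-, -, -, hσ, hτ⟩ := hστ.exists
    refine ⟨σ.inversions, mem_image_of_mem _ ?_, hσ, hτ ▸ mem_image_of_mem _ ?_⟩
    · exact S.toFinite.mem_toFinset.mpr (hστ.mono fun _ h => h.1)
    · exact S.toFinite.mem_toFinset.mpr (hστ.mono fun _ h => h.2.1)
  have hcube := card_add_one_le_of_forall_exists_insert_mem _ hV hedge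
  rw [card_product_filter_lt, card_univ, Fintype.card_fin] at hcube
  rw [Set.ncard_eq_toFinset_card S]
  exact hcube.trans card_image_le

end Orderings

section Crossings

variable {q : ℕ} {F : (ZMod q)ˣ → ℝ → ℝ}

theorem IsKTSystem.frequently_lt {B : ZeroSystem q} {D : Set (ZMod q)ˣ} (hB : IsKTSystem B D)
    (hF : FamilySimilar B.Rminus F B) {a b : (ZMod q)ˣ} (ha : a ∈ D) (hb : b ∈ D) (hab : a ≠ b) :
    ∃ᶠ x in atTop, F b x < F a x :=
  frequently_atTop'.mpr (hB F hF a ha b hb hab)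

theorem GoodFamily.frequently_eq (hgood : GoodFamily F) {a b : (ZMod q)ˣ}
    (hab : ∃ᶠ x in atTop, F a x < F b x) (hba : ∃ᶠ x in atTop, F b x < F a x) :
    ∃ᶠ x in atTop, F a x = F b x := by
  refine frequently_atTop.mpr fun X => ?_
  obtain ⟨x, hxX, hx⟩ := frequently_atTop.mp hab X
  obtain ⟨y, hyx, hy⟩ := frequently_atTop.mp hba x
  obtain ⟨w, hxw, -, hw⟩ := hgood a b x y hx hy
  exact ⟨w, hxX.trans ((le_min le_rfl hyx).trans hxw), hw⟩

end Crossings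

theorem statement16_general (q : ℕ) (r : ℕ) (a : Fin r → (ZMod q)ˣ)
    (ha : Function.Injective a) (B : ZeroSystem q)
    (hKT : IsKTSystem B (Set.range a))
    (F : (ZMod q)ˣ → ℝ → ℝ) (hgood : GoodFamily F)
    (hF : FamilySimilar B.Rminus F B) :
    r * (r - 1) / 2 + 1 ≤
      Set.ncard {σ : Equiv.Perm (Fin r) |
        ∀ X : ℝ, ∃ x > X, ∀ i j : Fin r, i ≤ j → F (a (σ j)) x ≤ F (a (σ i)) x} := by
  have hcross (i j : Fin r) (hij : i < j) : ∃ᶠ x in atTop, F (a i) x = F (a j) x := by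
    have hne : a i ≠ a j := ha.ne hij.ne
    exact hgood.frequently_eq (hKT.frequently_lt hF ⟨j, rfl⟩ ⟨i, rfl⟩ hne.symm)
      (hKT.frequently_lt hF ⟨i, rfl⟩ ⟨j, rfl⟩ hne)
  have hcount := choose_two_add_one_le_ncard_frequently_antitone _ hcross
  simp only [frequently_atTop', Nat.choose_two_right] at hcount
  exact hcount

theorem statement16 (q : ℕ) (hq : 3 ≤ q) (r : ℕ) (a : Fin r → (ZMod q)ˣ)
    (ha : Function.Injective a) (B : ZeroSystem q)
    (hKT : IsKTSystem B (Set.range a))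
    (F : (ZMod q)ˣ → ℝ → ℝ) (hgood : GoodFamily F)
    (hF : FamilySimilar B.Rminus F B) :
    r * (r - 1) / 2 + 1 ≤
      Set.ncard {σ : Equiv.Perm (Fin r) |
        ∀ X : ℝ, ∃ x > X, ∀ i j : Fin r, i ≤ j → F (a (σ j)) x ≤ F (a (σ i)) x} :=
  statement16_general q r a ha B hKT F hgood hF
end
end

section
/- Let r be a positive integer and let c_v, d_v (v = 0, …, r−1) be real numbers such that c_v = c_{r−v} for v = 1, …, r−1, d₀ = 0, and d_v = −d_{r−v} for v = 1, …, r−1. Then there exist real numbers ν_j (j = 0, …, r−1) such that for every v ∈ {0, …, r−1} and every real u, Σ_{j=0}^{r−1} ν_j sin(u + 2πjv/r) = c_v sin u + d_v cos u. -/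
/-!
Put `Ψ k = c k + i d k` on `ZMod r`. The hypotheses say exactly that `Ψ (-k) = conj (Ψ k)`, so the
discrete Fourier transform of `Ψ` is real-valued. Taking `ν = (1 / r) 𝓕 Ψ`, Fourier inversion gives
`∑ j, ν j e^{2πijv/r} = c v + i d v`; multiplying by `e^{iu}` and taking imaginary parts yields
`∑ j, ν j sin (u + 2πjv/r) = c v sin u + d v cos u`.
-/

open Complex ComplexConjugate Finset
open scoped ZMod

namespace ZMod

variable {N : ℕ} [NeZero N]

theorem sum_range_natCast {M : Type*} [AddCommMonoid M] (f : ZMod N → M) :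
    ∑ j ∈ range N, f j = ∑ j, f j :=
  sum_nbij' Nat.cast val (by simp) (by simp [val_lt])
    (fun _ hj ↦ val_cast_of_lt (mem_range.1 hj)) (fun j _ ↦ natCast_zmod_val j) (fun _ _ ↦ rfl)

theorem conj_stdAddChar (k : ZMod N) : conj (stdAddChar k) = stdAddChar (-k) := by
  rw [stdAddChar_apply, stdAddChar_apply, AddChar.map_neg_eq_inv, Circle.coe_inv_eq_conj]

theorem stdAddChar_natCast_mul_natCast (j v : ℕ) :
    stdAddChar ((j : ZMod N) * (v : ZMod N)) = exp ((2 * Real.pi * j * v / N : ℝ) * I) := by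
  rw [← Nat.cast_mul, stdAddChar_apply, toCircle_natCast]
  push_cast
  ring_nf

theorem conj_dft_eq_self_of_map_neg_eq_conj {Ψ : ZMod N → ℂ}
    (hΨ : ∀ k, Ψ (-k) = conj (Ψ k)) (j : ZMod N) : conj (𝓕 Ψ j) = 𝓕 Ψ j :=
  calc conj (𝓕 Ψ j) = 𝓕 (fun k ↦ Ψ (-k)) (-j) := by
        simp [dft_apply, conj_stdAddChar, hΨ, mul_neg]
    _ = 𝓕 Ψ j := by simp only [dft_comp_neg, neg_neg]

theorem exists_real_sum_mul_stdAddChar_eq {Ψ : ZMod N → ℂ} (hΨ : ∀ k, Ψ (-k) = conj (Ψ k)) :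
    ∃ φ : ZMod N → ℝ, ∀ k, ∑ j, (φ j : ℂ) * stdAddChar (j * k) = Ψ k := by
  refine ⟨fun j ↦ (𝓕 Ψ j).re / N, fun k ↦ ?_⟩
  have hreal (j : ZMod N) : ((𝓕 Ψ j).re : ℂ) = 𝓕 Ψ j :=
    conj_eq_iff_re.mp (conj_dft_eq_self_of_map_neg_eq_conj hΨ j)
  calc ∑ j, (((𝓕 Ψ j).re / N : ℝ) : ℂ) * stdAddChar (j * k)
      = 𝓕⁻ (𝓕 Ψ) k := by
        simp only [invDFT_apply, smul_eq_mul, mul_sum, ofReal_div, hreal, ofReal_natCast]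
        exact sum_congr rfl fun j _ ↦ by ring
    _ = Ψ k := congrFun (dft.symm_apply_apply Ψ) k

end ZMod

theorem sum_mul_sin_add_eq_of_sum_mul_exp_eq {ι : Type*} (s : Finset ι) (ν θ : ι → ℝ) {z : ℂ}
    (h : ∑ j ∈ s, (ν j : ℂ) * exp (θ j * I) = z) (u : ℝ) :
    ∑ j ∈ s, ν j * Real.sin (u + θ j) = z.re * Real.sin u + z.im * Real.cos u := by
  have hre : z.re = ∑ j ∈ s, ν j * Real.cos (θ j) := by
    simp [← h, re_sum, exp_ofReal_mul_I_re]
  have him : z.im = ∑ j ∈ s, ν j * Real.sin (θ j) := by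
    simp [← h, im_sum, exp_ofReal_mul_I_im]
  simp only [hre, him, Real.sin_add, sum_mul, ← sum_add_distrib]
  exact sum_congr rfl fun j _ ↦ by ring

/-- Lemma 4.4. -/
theorem statement18 (r : ℕ) (hr : 0 < r) (c d : ℕ → ℝ)
    (hc : ∀ v, 1 ≤ v → v ≤ r - 1 → c v = c (r - v))
    (hd0 : d 0 = 0)
    (hd : ∀ v, 1 ≤ v → v ≤ r - 1 → d v = -d (r - v)) :
    ∃ ν : ℕ → ℝ, ∀ v < r, ∀ u : ℝ,
      ∑ j ∈ Finset.range r, ν j * Real.sin (u + 2 * Real.pi * j * v / r) =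
        c v * Real.sin u + d v * Real.cos u := by
  have : NeZero r := ⟨hr.ne'⟩
  set Ψ : ZMod r → ℂ := fun k ↦ ⟨c k.val, d k.val⟩
  have hΨ (k : ZMod r) : Ψ (-k) = conj (Ψ k) := by
    rcases eq_or_ne k 0 with rfl | hk
    · simp [Ψ, Complex.ext_iff, hd0]
    · have : NeZero k := ⟨hk⟩
      have hk_pos := ZMod.val_pos.mpr hk
      have hk_lt := k.val_lt
      simp [Ψ, Complex.ext_iff, ZMod.val_neg_of_ne_zero, hc k.val (by omega) (by omega),
        hd k.val (by omega) (by omega)]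
  obtain ⟨φ, hφ⟩ := ZMod.exists_real_sum_mul_stdAddChar_eq hΨ
  refine ⟨fun j ↦ φ j, fun v hv u ↦ ?_⟩
  have hsum := hφ v
  rw [← ZMod.sum_range_natCast] at hsum
  simp only [ZMod.stdAddChar_natCast_mul_natCast] at hsum
  simpa [Ψ, ZMod.val_cast_of_lt hv, mul_div_assoc] using
    sum_mul_sin_add_eq_of_sum_mul_exp_eq _ _ _ hsum u
end
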